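/- Let μ and μ' be Borel measures on S¹×S¹, each of which is swap-invariant, has null slices, and gives measure zero to the diagonal Δ. Suppose that for all pairs of distinct points x, x' ∈ S¹ the linking values agree and are finite: μ(L(x,x')) = μ'(L(x,x')) < ∞. Then μ = μ'. -/

import Mathlib

/-!
Push both measures forward along `circleRep × circleRep` to `ℝ × ℝ`, where they live on
`(0, 2π]²`. Up to null slices, `L(s, t)` becomes `(s, t] × ((0, s] ∪ (t, 2π])`. Cutting
`(0, 2π]` at `0 < a < b ≤ c < d ≤ 2π` gives
`L(a,c) + L(b,d) = L(a,d) + L(b,c) + ν((a,b] × (c,d]) + ν((c,d] × (a,b])`, and the last two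
terms are equal by swap-invariance; since the linking values are finite, every off-diagonal
rectangle has the same measure for both measures. Rectangles form a π-system, so the measures
agree on each `(p, q] × (q, 2π]`, and countably many of these together with their mirror images
cover the complement of the diagonal.
-/

open MeasureTheory Set

noncomputable section

local instance : Fact (0 < 2 * Real.pi) := ⟨by positivity⟩

/-- The representative of a point of the circle `S¹ = ℝ/2πℤ` in the interval `(0, 2π]`. -/
def circleRep (x : AddCircle (2 * Real.pi)) : ℝ :=
  (AddCircle.equivIoc (2 * Real.pi) 0 x : ℝ)

/-- The open arc of points traversed when moving counterclockwise from `a` to `b`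
(for `a ≠ b`): those `x` whose angular distance from `a` is smaller than that of `b`. -/
def Arc (a b : AddCircle (2 * Real.pi)) : Set (AddCircle (2 * Real.pi)) :=
  {x | circleRep (x - a) < circleRep (b - a)}

/-- The ordered linking set `L(a,b) := Arc(a,b) × Arc(b,a) ⊆ S¹ × S¹`. -/
def LinkSet (a b : AddCircle (2 * Real.pi)) :
    Set (AddCircle (2 * Real.pi) × AddCircle (2 * Real.pi)) :=
  (Arc a b) ×ˢ (Arc b a)

open scoped ENNReal

lemma measure_insert_prod_insert {α β : Type*} [MeasurableSpace α] [MeasurableSpace β]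
    {ρ : Measure (α × β)} {a : α} {b : β} (ha : ρ ({a} ×ˢ univ) = 0) (hb : ρ (univ ×ˢ {b}) = 0)
    (A : Set α) (B : Set β) : ρ (insert a A ×ˢ insert b B) = ρ (A ×ˢ B) := by
  refine le_antisymm (measure_mono_ae (ae_le_set.2 ?_))
    (measure_mono (prod_mono (subset_insert a A) (subset_insert b B)))
  refine measure_mono_null ?_ (measure_union_null ha hb)
  rintro ⟨x, y⟩ ⟨⟨hx, hy⟩, hxy⟩
  rcases hx with rfl | hx
  · exact Or.inl ⟨rfl, trivial⟩
  rcases hy with rfl | hy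
  · exact Or.inr ⟨trivial, rfl⟩
  exact absurd ⟨hx, hy⟩ hxy

lemma measure_union_prod {α β : Type*} [MeasurableSpace α] [MeasurableSpace β]
    (ρ : Measure (α × β)) {X Y : Set α} {Z : Set β} (hXY : Disjoint X Y) (hY : MeasurableSet Y)
    (hZ : MeasurableSet Z) : ρ ((X ∪ Y) ×ˢ Z) = ρ (X ×ˢ Z) + ρ (Y ×ˢ Z) := by
  rw [union_prod, measure_union (disjoint_prod.2 (Or.inl hXY)) (hY.prod hZ)]

lemma measure_prod_union {α β : Type*} [MeasurableSpace α] [MeasurableSpace β]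
    (ρ : Measure (α × β)) {X : Set α} {Y Z : Set β} (hYZ : Disjoint Y Z) (hX : MeasurableSet X)
    (hZ : MeasurableSet Z) : ρ (X ×ˢ (Y ∪ Z)) = ρ (X ×ˢ Y) + ρ (X ×ˢ Z) := by
  rw [prod_union, measure_union (disjoint_prod.2 (Or.inr hYZ)) (hX.prod hZ)]

lemma measure_prod_comm_of_map_swap {α : Type*} [MeasurableSpace α]
    {ρ : Measure (α × α)} (hρ : ρ.map Prod.swap = ρ) {X Y : Set α} (hX : MeasurableSet X)
    (hY : MeasurableSet Y) : ρ (X ×ˢ Y) = ρ (Y ×ˢ X) := by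
  conv_lhs => rw [← hρ]
  rw [Measure.map_apply measurable_swap (hX.prod hY), preimage_swap_prod]

lemma restrict_preimage_swap {α : Type*} [MeasurableSpace α] {ρ : Measure (α × α)}
    (hρ : ρ.map Prod.swap = ρ) (s : Set (α × α)) :
    ρ.restrict (Prod.swap ⁻¹' s) = (ρ.restrict s).map Prod.swap := by
  have h : (ρ.map Prod.swap).restrict (Prod.swap ⁻¹' s)
      = (ρ.restrict (Prod.swap ⁻¹' (Prod.swap ⁻¹' s))).map Prod.swap :=
    MeasurableEquiv.prodComm.measurableEmbedding.restrict_map ρ _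
  simpa [preimage_preimage, hρ] using h

lemma map_swap_map_prodMap {α β : Type*} [MeasurableSpace α] [MeasurableSpace β]
    {μ : Measure (α × α)} (hμ : μ.map Prod.swap = μ) {f : α → β} (hf : Measurable f) :
    (μ.map (Prod.map f f)).map Prod.swap = μ.map (Prod.map f f) := by
  rw [Measure.map_map measurable_swap (hf.prodMap hf), ← Prod.map_comp_swap,
    ← Measure.map_map (hf.prodMap hf) measurable_swap, hμ]

lemma map_prodMap_diagonal {α β : Type*} [MeasurableSpace α] [MeasurableSpace β]
    (μ : Measure (α × α)) {f : α → β} (hf : MeasurableEmbedding f) :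
    μ.map (Prod.map f f) (diagonal β) = μ (diagonal α) := by
  rw [(hf.prodMap hf).map_apply]
  congr 1
  ext ⟨x, y⟩
  exact hf.injective.eq_iff

lemma isCountablySpanning_Ioc_real :
    IsCountablySpanning {S : Set ℝ | ∃ l u, l < u ∧ Ioc l u = S} := by
  refine ⟨fun n => Ioc (-(n + 1 : ℝ)) (n + 1),
    fun n => ⟨_, _, by linarith [n.cast_nonneg (α := ℝ)], rfl⟩, ?_⟩
  refine eq_univ_of_forall fun x => mem_iUnion.2 ?_
  obtain ⟨n, hn⟩ := exists_nat_gt |x|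
  exact ⟨n, by linarith [neg_abs_le x], by linarith [le_abs_self x]⟩

theorem MeasureTheory.Measure.ext_of_Ioc_prod_Ioc {ν ν' : Measure (ℝ × ℝ)}
    (hfin : ∀ a b c d : ℝ, ν (Ioc a b ×ˢ Ioc c d) ≠ ∞)
    (heq : ∀ a b c d : ℝ, ν (Ioc a b ×ˢ Ioc c d) = ν' (Ioc a b ×ˢ Ioc c d)) : ν = ν' := by
  have hgen := (borel_eq_generateFrom_Ioc ℝ).symm
  have hpi := isPiSystem_Ioc (id : ℝ → ℝ) id
  obtain ⟨B, hBC, hB⟩ := isCountablySpanning_Ioc_real.prod isCountablySpanning_Ioc_real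
  refine Measure.ext_of_generateFrom_of_iUnion _ B (generateFrom_eq_prod hgen hgen
    isCountablySpanning_Ioc_real isCountablySpanning_Ioc_real).symm (hpi.prod hpi) hB hBC ?_ ?_
  · intro n
    obtain ⟨_, ⟨a, b, -, rfl⟩, _, ⟨c, d, -, rfl⟩, hn⟩ := hBC n
    exact hn ▸ hfin a b c d
  · rintro _ ⟨_, ⟨a, b, -, rfl⟩, _, ⟨c, d, -, rfl⟩, rfl⟩
    exact heq a b c d

/-- `LinkSet s t` read through `circleRep`, up to the slices at `s` and `t`. -/
def intervalLinkSet (T s t : ℝ) : Set (ℝ × ℝ) := Ioc s t ×ˢ (Ioc 0 s ∪ Ioc t T)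

lemma measure_intervalLinkSet_add_measure_intervalLinkSet (ρ : Measure (ℝ × ℝ))
    {T a b c d : ℝ} (ha : 0 ≤ a) (hab : a ≤ b) (hbc : b ≤ c) (hcd : c ≤ d) (hd : d ≤ T) :
    ρ (intervalLinkSet T a c) + ρ (intervalLinkSet T b d) =
      ρ (intervalLinkSet T a d) + ρ (intervalLinkSet T b c) +
        (ρ (Ioc a b ×ˢ Ioc c d) + ρ (Ioc c d ×ˢ Ioc a b)) := by
  set P₁ := Ioc a b with hP₁
  set P₂ := Ioc b c with hP₂
  set P₃ := Ioc c d with hP₃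
  set P₄ := Ioc 0 a ∪ Ioc d T with hP₄
  obtain ⟨e₁, e₂, e₃, e₄⟩ :
      intervalLinkSet T a c = (P₁ ∪ P₂) ×ˢ (P₃ ∪ P₄) ∧
      intervalLinkSet T b d = (P₂ ∪ P₃) ×ˢ (P₁ ∪ P₄) ∧
      intervalLinkSet T a d = (P₁ ∪ P₂ ∪ P₃) ×ˢ P₄ ∧
      intervalLinkSet T b c = P₂ ×ˢ (P₁ ∪ (P₃ ∪ P₄)) := by
    refine ⟨?_, ?_, ?_, ?_⟩ <;> ext ⟨u, v⟩ <;>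
      simp only [intervalLinkSet, hP₁, hP₂, hP₃, hP₄, mem_prod, mem_union, mem_Ioc] <;> grind
  have d₁₂ : Disjoint P₁ P₂ := Ioc_disjoint_Ioc_of_le le_rfl
  have d₂₃ : Disjoint P₂ P₃ := Ioc_disjoint_Ioc_of_le le_rfl
  have d₁₂₃ : Disjoint (P₁ ∪ P₂) P₃ := by
    rw [hP₁, hP₂, Ioc_union_Ioc_eq_Ioc hab hbc]
    exact Ioc_disjoint_Ioc_of_le le_rfl
  have d₁₄ : Disjoint P₁ P₄ := by
    rw [disjoint_union_right]
    exact ⟨(Ioc_disjoint_Ioc_of_le le_rfl).symm, Ioc_disjoint_Ioc_of_le (hbc.trans hcd)⟩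
  have d₃₄ : Disjoint P₃ P₄ := by
    rw [disjoint_union_right]
    exact ⟨(Ioc_disjoint_Ioc_of_le (hab.trans hbc)).symm, Ioc_disjoint_Ioc_of_le le_rfl⟩
  have d₁₃₄ : Disjoint P₁ (P₃ ∪ P₄) :=
    disjoint_union_right.2 ⟨Ioc_disjoint_Ioc_of_le hbc, d₁₄⟩
  have m : ∀ {x y : ℝ}, MeasurableSet (Ioc x y) := measurableSet_Ioc
  rw [e₁, e₂, e₃, e₄, measure_union_prod ρ d₁₂ m (m.union (m.union m)),
    measure_prod_union ρ d₃₄ m (m.union m), measure_prod_union ρ d₃₄ m (m.union m),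
    measure_union_prod ρ d₂₃ m (m.union (m.union m)), measure_prod_union ρ d₁₄ m (m.union m),
    measure_prod_union ρ d₁₄ m (m.union m), measure_union_prod ρ d₁₂₃ m (m.union m),
    measure_union_prod ρ d₁₂ m (m.union m), measure_prod_union ρ d₁₃₄ m (m.union (m.union m)),
    measure_prod_union ρ d₃₄ m (m.union m)]
  ring

lemma measure_Ioc_prod_Ioc_eq_of_intervalLinkSet {T : ℝ} {ν ν' : Measure (ℝ × ℝ)}
    (hswap : ν.map Prod.swap = ν) (hswap' : ν'.map Prod.swap = ν')
    (hlink : ∀ s t : ℝ, 0 < s → s < t → t ≤ T →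
      ν (intervalLinkSet T s t) = ν' (intervalLinkSet T s t) ∧ ν (intervalLinkSet T s t) ≠ ∞)
    {a b c d : ℝ} (ha : 0 < a) (hbc : b ≤ c) (hd : d ≤ T) :
    ν (Ioc a b ×ˢ Ioc c d) = ν' (Ioc a b ×ˢ Ioc c d) ∧ ν (Ioc a b ×ˢ Ioc c d) ≠ ∞ := by
  rcases le_or_gt b a with hab | hab
  · simp [Ioc_eq_empty_of_le hab]
  rcases le_or_gt d c with hcd | hcd
  · simp [Ioc_eq_empty_of_le hcd]
  have hlink_le : ∀ s t : ℝ, 0 < s → s ≤ t → t ≤ T →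
      ν (intervalLinkSet T s t) = ν' (intervalLinkSet T s t) ∧ ν (intervalLinkSet T s t) ≠ ∞ := by
    intro s t hs hst ht
    rcases hst.eq_or_lt with rfl | hst
    · simp [intervalLinkSet]
    · exact hlink s t hs hst ht
  obtain ⟨hac, hac_fin⟩ := hlink_le a c ha (hab.le.trans hbc) (hcd.le.trans hd)
  obtain ⟨hbd, -⟩ := hlink_le b d (ha.trans hab) (hbc.trans hcd.le) hd
  obtain ⟨had, had_fin⟩ := hlink_le a d ha (hab.le.trans (hbc.trans hcd.le)) hd
  obtain ⟨hbc', hbc_fin⟩ := hlink_le b c (ha.trans hab) hbc (hcd.le.trans hd)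
  have key := measure_intervalLinkSet_add_measure_intervalLinkSet ν ha.le hab.le hbc hcd.le hd
  have key' := measure_intervalLinkSet_add_measure_intervalLinkSet ν' ha.le hab.le hbc hcd.le hd
  rw [measure_prod_comm_of_map_swap hswap measurableSet_Ioc measurableSet_Ioc (X := Ioc c d)]
    at key
  rw [measure_prod_comm_of_map_swap hswap' measurableSet_Ioc measurableSet_Ioc (X := Ioc c d)]
    at key'
  rw [hac, hbd, had, hbc', key'] at key
  have hfin : ν' (intervalLinkSet T a d) + ν' (intervalLinkSet T b c) ≠ ∞ :=
    ENNReal.add_ne_top.2 ⟨had ▸ had_fin, hbc' ▸ hbc_fin⟩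
  refine ⟨?_, ne_top_of_le_ne_top hac_fin (measure_mono (prod_mono (Ioc_subset_Ioc_right hbc)
    fun x hx => Or.inr ⟨hx.1, hx.2.trans hd⟩))⟩
  have hdouble := ((ENNReal.add_right_inj hfin).1 key).symm
  simpa [← two_mul, ENNReal.mul_right_inj] using hdouble

lemma restrict_Ioc_prod_Ioc_eq {T p q : ℝ} {ν ν' : Measure (ℝ × ℝ)} (hp : 0 < p)
    (hrect : ∀ a b c d : ℝ, 0 < a → b ≤ c → d ≤ T →
      ν (Ioc a b ×ˢ Ioc c d) = ν' (Ioc a b ×ˢ Ioc c d) ∧ ν (Ioc a b ×ˢ Ioc c d) ≠ ∞) :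
    ν.restrict (Ioc p q ×ˢ Ioc q T) = ν'.restrict (Ioc p q ×ˢ Ioc q T) := by
  have hrestrict : ∀ (ρ : Measure (ℝ × ℝ)) (a b c d : ℝ),
      ρ.restrict (Ioc p q ×ˢ Ioc q T) (Ioc a b ×ˢ Ioc c d)
        = ρ (Ioc (a ⊔ p) (b ⊓ q) ×ˢ Ioc (c ⊔ q) (d ⊓ T)) := by
    intro ρ a b c d
    rw [Measure.restrict_apply (measurableSet_Ioc.prod measurableSet_Ioc), prod_inter_prod,
      Ioc_inter_Ioc, Ioc_inter_Ioc]
  have h := fun a b c d => hrect (a ⊔ p) (b ⊓ q) (c ⊔ q) (d ⊓ T) (lt_sup_of_lt_right hp)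
    (inf_le_right.trans le_sup_right) inf_le_right
  refine Measure.ext_of_Ioc_prod_Ioc (fun a b c d => ?_) (fun a b c d => ?_)
  · rw [hrestrict]; exact (h a b c d).2
  · rw [hrestrict, hrestrict]; exact (h a b c d).1

lemma exists_rat_Ioc_prod_Ioc_mem {T u v : ℝ} (hu : 0 < u) (huv : u < v) (hv : v ≤ T) :
    ∃ p q : ℚ, 0 < p ∧ (u, v) ∈ Ioc (p : ℝ) q ×ˢ Ioc (q : ℝ) T := by
  obtain ⟨p, hp₀, hpu⟩ := exists_rat_btwn hu
  obtain ⟨q, huq, hqv⟩ := exists_rat_btwn huv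
  exact ⟨p, q, by exact_mod_cast hp₀, ⟨hpu, huq.le⟩, hqv, hv⟩

theorem eq_of_intervalLinkSet {T : ℝ} {ν ν' : Measure (ℝ × ℝ)}
    (hswap : ν.map Prod.swap = ν) (hswap' : ν'.map Prod.swap = ν')
    (hdiag : ν (diagonal ℝ) = 0) (hdiag' : ν' (diagonal ℝ) = 0)
    (hsupp : ν (Ioc 0 T ×ˢ Ioc 0 T)ᶜ = 0) (hsupp' : ν' (Ioc 0 T ×ˢ Ioc 0 T)ᶜ = 0)
    (hlink : ∀ s t : ℝ, 0 < s → s < t → t ≤ T →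
      ν (intervalLinkSet T s t) = ν' (intervalLinkSet T s t) ∧ ν (intervalLinkSet T s t) ≠ ∞) :
    ν = ν' := by
  let R : {p : ℚ // 0 < p} × ℚ → Set (ℝ × ℝ) := fun i => Ioc (i.1 : ℝ) i.2 ×ˢ Ioc (i.2 : ℝ) T
  have hcover : (diagonal ℝ ∪ (Ioc 0 T ×ˢ Ioc 0 T)ᶜ)ᶜ ⊆ ⋃ i, (R i ∪ Prod.swap ⁻¹' R i) := by
    rintro ⟨u, v⟩ h
    simp only [compl_union, compl_compl, mem_inter_iff, mem_compl_iff, mem_diagonal_iff,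
      mem_prod, mem_Ioc] at h
    obtain ⟨huv, ⟨hu, hu'⟩, hv, hv'⟩ := h
    rcases lt_or_gt_of_ne huv with huv | hvu
    · obtain ⟨p, q, hp, hmem⟩ := exists_rat_Ioc_prod_Ioc_mem hu huv hv'
      exact mem_iUnion.2 ⟨(⟨p, hp⟩, q), Or.inl hmem⟩
    · obtain ⟨p, q, hp, hmem⟩ := exists_rat_Ioc_prod_Ioc_mem hv hvu hu'
      exact mem_iUnion.2 ⟨(⟨p, hp⟩, q), Or.inr hmem⟩
  have hrestrict : ∀ ρ : Measure (ℝ × ℝ), ρ (diagonal ℝ) = 0 → ρ (Ioc 0 T ×ˢ Ioc 0 T)ᶜ = 0 →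
      ρ.restrict (⋃ i, (R i ∪ Prod.swap ⁻¹' R i)) = ρ := fun ρ h₁ h₂ =>
    Measure.restrict_eq_self_of_ae_mem
      (measure_mono_null (compl_subset_comm.1 hcover) (measure_union_null h₁ h₂))
  have hrect : ∀ a b c d : ℝ, 0 < a → b ≤ c → d ≤ T →
      ν (Ioc a b ×ˢ Ioc c d) = ν' (Ioc a b ×ˢ Ioc c d) ∧ ν (Ioc a b ×ˢ Ioc c d) ≠ ∞ :=
    fun _ _ _ _ => measure_Ioc_prod_Ioc_eq_of_intervalLinkSet hswap hswap' hlink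
  rw [← hrestrict ν hdiag hsupp, ← hrestrict ν' hdiag' hsupp', Measure.restrict_iUnion_congr]
  intro i
  have hR : ν.restrict (R i) = ν'.restrict (R i) :=
    restrict_Ioc_prod_Ioc_eq (by exact_mod_cast i.1.2) hrect
  rw [Measure.restrict_union_congr, restrict_preimage_swap hswap, restrict_preimage_swap hswap',
    hR]
  exact ⟨rfl, rfl⟩

local notation "𝕋" => AddCircle (2 * Real.pi)

lemma circleRep_mem_Ioc (x : 𝕋) : circleRep x ∈ Ioc 0 (2 * Real.pi) := by
  simpa [circleRep] using (AddCircle.equivIoc (2 * Real.pi) 0 x).2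

lemma coe_circleRep (x : 𝕋) : (circleRep x : 𝕋) = x :=
  (AddCircle.equivIoc (2 * Real.pi) 0).symm_apply_apply x

lemma circleRep_coe {r : ℝ} (h : r ∈ Ioc 0 (2 * Real.pi)) : circleRep (r : 𝕋) = r := by
  rw [circleRep, AddCircle.equivIoc, QuotientAddGroup.equivIocMod_coe,
    toIocMod_eq_self (by positivity), zero_add]
  exact h

lemma measurableEmbedding_circleRep : MeasurableEmbedding circleRep :=
  (MeasurableEmbedding.subtype_coe measurableSet_Ioc).comp
    (AddCircle.measurableEquivIoc (2 * Real.pi) 0).measurableEmbedding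

lemma circleRep_sub (x y : 𝕋) :
    circleRep (x - y) = if circleRep y < circleRep x then circleRep x - circleRep y
      else circleRep x - circleRep y + 2 * Real.pi := by
  have hx := circleRep_mem_Ioc x
  have hy := circleRep_mem_Ioc y
  conv_lhs => rw [← coe_circleRep x, ← coe_circleRep y, ← AddCircle.coe_sub]
  split_ifs with h
  · exact circleRep_coe ⟨by linarith, by linarith [hx.2, hy.1]⟩
  · rw [← AddCircle.coe_add_period]
    exact circleRep_coe ⟨by linarith [hx.1, hy.2], by linarith⟩

lemma insert_arc (a b : 𝕋) :
    insert b (Arc a b) = {x | circleRep (x - a) ≤ circleRep (b - a)} := by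
  ext x
  simp only [mem_insert_iff, Arc, mem_ofPred_eq, le_iff_lt_or_eq,
    measurableEmbedding_circleRep.injective.eq_iff, sub_left_inj]
  exact or_comm

lemma preimage_circleRep_Ioc {s t : ℝ} (hs : 0 < s) (hst : s < t) (ht : t ≤ 2 * Real.pi) :
    circleRep ⁻¹' Ioc s t = insert (t : 𝕋) (Arc s t) := by
  ext x
  have hx := circleRep_mem_Ioc x
  rw [insert_arc, mem_ofPred_eq, circleRep_sub, circleRep_sub,
    circleRep_coe ⟨hs, hst.le.trans ht⟩, circleRep_coe ⟨hs.trans hst, ht⟩, if_pos hst,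
    mem_preimage, mem_Ioc]
  split_ifs <;> grind

lemma preimage_circleRep_Ioc_union_Ioc {s t : ℝ} (hs : 0 < s) (hst : s < t)
    (ht : t ≤ 2 * Real.pi) :
    circleRep ⁻¹' (Ioc 0 s ∪ Ioc t (2 * Real.pi)) = insert (s : 𝕋) (Arc t s) := by
  ext x
  have hx := circleRep_mem_Ioc x
  rw [insert_arc, mem_ofPred_eq, circleRep_sub, circleRep_sub,
    circleRep_coe ⟨hs, hst.le.trans ht⟩, circleRep_coe ⟨hs.trans hst, ht⟩, if_neg hst.not_gt,
    mem_preimage, mem_union, mem_Ioc, mem_Ioc]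
  split_ifs <;> grind

lemma map_circleRep_compl_Ioc_prod_Ioc (μ : Measure (𝕋 × 𝕋)) :
    μ.map (Prod.map circleRep circleRep) (Ioc 0 (2 * Real.pi) ×ˢ Ioc 0 (2 * Real.pi))ᶜ = 0 := by
  rw [(measurableEmbedding_circleRep.prodMap measurableEmbedding_circleRep).map_apply,
    preimage_compl, preimage_prod_map_prod,
    preimage_eq_univ_iff.2 (range_subset_iff.2 circleRep_mem_Ioc), univ_prod_univ, compl_univ,
    measure_empty]

lemma map_circleRep_intervalLinkSet {μ : Measure (𝕋 × 𝕋)}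
    (hslice : ∀ a : 𝕋, μ ({a} ×ˢ univ) = 0 ∧ μ (univ ×ˢ {a}) = 0)
    {s t : ℝ} (hs : 0 < s) (hst : s < t) (ht : t ≤ 2 * Real.pi) :
    μ.map (Prod.map circleRep circleRep) (intervalLinkSet (2 * Real.pi) s t)
      = μ (LinkSet s t) := by
  rw [(measurableEmbedding_circleRep.prodMap measurableEmbedding_circleRep).map_apply,
    intervalLinkSet, preimage_prod_map_prod, preimage_circleRep_Ioc hs hst ht,
    preimage_circleRep_Ioc_union_Ioc hs hst ht, measure_insert_prod_insert (hslice _).1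
    (hslice _).2, LinkSet]

/-- Lemma 2.7 of the paper ("douady"): two swap-invariant Borel measures on `S¹ × S¹`
with null slices, vanishing on the diagonal, whose linking values `μ(L(x,x'))` agree
and are finite for all pairs of distinct points `x, x' ∈ S¹`, are equal. -/
theorem measure_eq_of_eq_linking_values
    (μ μ' : Measure (AddCircle (2 * Real.pi) × AddCircle (2 * Real.pi)))
    (hswap : μ.map Prod.swap = μ) (hswap' : μ'.map Prod.swap = μ')
    (hslice : ∀ a : AddCircle (2 * Real.pi),
      μ (({a} : Set (AddCircle (2 * Real.pi))) ×ˢ (univ : Set (AddCircle (2 * Real.pi)))) = 0 ∧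
      μ ((univ : Set (AddCircle (2 * Real.pi))) ×ˢ ({a} : Set (AddCircle (2 * Real.pi)))) = 0)
    (hslice' : ∀ a : AddCircle (2 * Real.pi),
      μ' (({a} : Set (AddCircle (2 * Real.pi))) ×ˢ (univ : Set (AddCircle (2 * Real.pi)))) = 0 ∧
      μ' ((univ : Set (AddCircle (2 * Real.pi))) ×ˢ ({a} : Set (AddCircle (2 * Real.pi)))) = 0)
    (hdiag : μ (Set.diagonal (AddCircle (2 * Real.pi))) = 0)
    (hdiag' : μ' (Set.diagonal (AddCircle (2 * Real.pi))) = 0)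
    (hlink : ∀ x x' : AddCircle (2 * Real.pi), x ≠ x' →
      μ (LinkSet x x') = μ' (LinkSet x x') ∧ μ (LinkSet x x') < ⊤) :
    μ = μ' := by
  have hφ := measurableEmbedding_circleRep
  rw [← (hφ.prodMap hφ).comap_map μ, ← (hφ.prodMap hφ).comap_map μ']
  congr 1
  refine eq_of_intervalLinkSet (map_swap_map_prodMap hswap hφ.measurable)
    (map_swap_map_prodMap hswap' hφ.measurable) ((map_prodMap_diagonal μ hφ).trans hdiag)
    ((map_prodMap_diagonal μ' hφ).trans hdiag') (map_circleRep_compl_Ioc_prod_Ioc μ)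
    (map_circleRep_compl_Ioc_prod_Ioc μ') fun s t hs hst ht => ?_
  have hne : (s : 𝕋) ≠ t := fun h => hst.ne <| by
    rw [← circleRep_coe ⟨hs, hst.le.trans ht⟩, h, circleRep_coe ⟨hs.trans hst, ht⟩]
  rw [map_circleRep_intervalLinkSet hslice hs hst ht,
    map_circleRep_intervalLinkSet hslice' hs hst ht]
  exact ⟨(hlink _ _ hne).1, (hlink _ _ hne).2.ne⟩
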